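/- arXiv:1504.08181 — 4 statements merged into one kernel-verified Lean document; each statement's English description precedes it below -/
import Mathlib

section
/- Let A → B → C be local homomorphisms of commutative Noetherian local rings such that B is flat as an A-module and C is flat as a B-module. Assume that the map B → C is formally étale and that the composite map A → C is formally unramified. Then A → B is formally unramified, i.e. the module of Kähler differentials Ω¹_{B/A} vanishes (so that, being flat and unramified, A → B is étale). -/
universe u

theorem Algebra.FormallyUnramified.of_comp_of_formallyEtale_of_faithfullyFlat
    (A B C : Type*) [CommRing A] [CommRing B] [CommRing C]
    [Algebra A B] [Algebra B C] [Algebra A C] [IsScalarTower A B C]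
    [Module.FaithfullyFlat B C] [Algebra.FormallyEtale B C] [Algebra.FormallyUnramified A C] :
    Algebra.FormallyUnramified A B := by
  have : Subsingleton (TensorProduct B C Ω[B⁄A]) :=
    (KaehlerDifferential.tensorKaehlerEquivOfFormallyEtale A B C).subsingleton
  exact ⟨Module.FaithfullyFlat.lTensor_reflects_triviality B C Ω[B⁄A]⟩

theorem formallyUnramified_of_formallyEtale_comp_general
    (A B C : Type u) [CommRing A] [CommRing B] [CommRing C]
    [IsLocalRing B] [IsLocalRing C]
    [Algebra A B] [Algebra B C] [Algebra A C] [IsScalarTower A B C]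
    [IsLocalHom (algebraMap B C)]
    [Module.Flat B C]
    [Algebra.FormallyEtale B C] [Algebra.FormallyUnramified A C] :
    Algebra.FormallyUnramified A B ∧ Subsingleton (KaehlerDifferential A B) := by
  have : Module.FaithfullyFlat B C := .of_flat_of_isLocalHom
  have : Algebra.FormallyUnramified A B :=
    .of_comp_of_formallyEtale_of_faithfullyFlat A B C
  exact ⟨this, inferInstance⟩

/-- Lemma 7.1: If `A → B → C` are flat local homomorphisms of Noetherian local rings
with `B → C` formally étale and `A → C` formally unramified, then `A → B` is
formally unramified, i.e. `Ω¹_{B/A} = 0`. -/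
theorem formallyUnramified_of_formallyEtale_comp
    (A B C : Type u) [CommRing A] [CommRing B] [CommRing C]
    [IsNoetherianRing A] [IsNoetherianRing B] [IsNoetherianRing C]
    [IsLocalRing A] [IsLocalRing B] [IsLocalRing C]
    [Algebra A B] [Algebra B C] [Algebra A C] [IsScalarTower A B C]
    [IsLocalHom (algebraMap A B)] [IsLocalHom (algebraMap B C)]
    [Module.Flat A B] [Module.Flat B C]
    [Algebra.FormallyEtale B C] [Algebra.FormallyUnramified A C] :
    Algebra.FormallyUnramified A B ∧ Subsingleton (KaehlerDifferential A B) :=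
  formallyUnramified_of_formallyEtale_comp_general A B C
end

section
/- Let f : A → B be an injective, finite, formally unramified local homomorphism of commutative Noetherian local rings which induces an isomorphism of the residue fields. Then f is an isomorphism, i.e. f is bijective. -/
/-!
Formal unramifiedness forces `m_A B = m_B`: the fibre `B / m_A B` is a finite unramified algebra
over the residue field of `A`, hence reduced and Artinian, and being local it is a field. The
residue field isomorphism then gives `B = f(A) + m_A B`, and Nakayama's lemma for the finite
`A`-module `B` gives `B = f(A)`.
-/

open IsLocalRing

theorem IsLocalRing.surjective_algebraMap_of_map_maximalIdeal_eq
    {R S : Type*} [CommRing R] [CommRing S] [IsLocalRing R] [IsLocalRing S]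
    [Algebra R S] [IsLocalHom (algebraMap R S)] [Module.Finite R S]
    (hmax : (maximalIdeal R).map (algebraMap R S) = maximalIdeal S)
    (hres : Function.Surjective (ResidueField.map (algebraMap R S))) :
    Function.Surjective (algebraMap R S) := by
  change Function.Surjective (Algebra.linearMap R S)
  rw [← LinearMap.range_eq_top, ← top_le_iff]
  apply Submodule.le_of_le_smul_of_le_jacobson_bot Module.Finite.fg_top
    (maximalIdeal_le_jacobson _)
  rw [Ideal.smul_top_eq_map, hmax]
  rintro x -
  obtain ⟨a, ha⟩ := hres (residue S x)
  obtain ⟨a, rfl⟩ := residue_surjective a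
  rw [ResidueField.map_residue, ← sub_eq_zero, ← map_sub, residue_eq_zero_iff] at ha
  rw [← sub_sub_self (algebraMap R S a) x]
  exact sub_mem (Submodule.mem_sup_left ⟨a, rfl⟩) (Submodule.mem_sup_right ha)

theorem bijective_of_finite_unramified_local_general
    (A B : Type*) [CommRing A] [CommRing B]
    [IsLocalRing A] [IsLocalRing B]
    [Algebra A B] [IsLocalHom (algebraMap A B)]
    (hinj : Function.Injective (algebraMap A B))
    [Module.Finite A B] [Algebra.FormallyUnramified A B]
    (hres : Function.Bijective (IsLocalRing.ResidueField.map (algebraMap A B))) :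
    Function.Bijective (algebraMap A B) :=
  ⟨hinj, surjective_algebraMap_of_map_maximalIdeal_eq
    Algebra.FormallyUnramified.map_maximalIdeal hres.surjective⟩

/-- Lemma 7.2: An injective, finite, formally unramified local homomorphism of
Noetherian local rings inducing an isomorphism of residue fields is an isomorphism. -/
theorem bijective_of_finite_unramified_local
    (A B : Type*) [CommRing A] [CommRing B]
    [IsNoetherianRing A] [IsNoetherianRing B]
    [IsLocalRing A] [IsLocalRing B]
    [Algebra A B] [IsLocalHom (algebraMap A B)]
    (hinj : Function.Injective (algebraMap A B))
    [Module.Finite A B] [Algebra.FormallyUnramified A B]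
    (hres : Function.Bijective (IsLocalRing.ResidueField.map (algebraMap A B))) :
    Function.Bijective (algebraMap A B) :=
  bijective_of_finite_unramified_local_general A B hinj hres
end

section
/- Let k be a field and let R be a commutative k-algebra which is formally smooth over k and such that Ω¹_{R/k} is a free R-module. Then for every integer i ≥ 0, the i-th exterior power ⋀ⁱ_R Ω¹_{R/ℤ} is a free R-module (possibly of infinite rank). In particular Ω¹_{R/ℤ} itself is a free R-module. -/
universe u

/-!
For `ℤ → k → R` the Jacobi–Zariski sequence
`H₁(L_{R/k}) → R ⊗[k] Ω[k⁄ℤ] → Ω[R⁄ℤ] → Ω[R⁄k] → 0` is exact. Formal smoothness of `R` over `k`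
kills `H₁(L_{R/k})` and makes `Ω[R⁄k]` projective, so the sequence is split short exact and
`Ω[R⁄ℤ] ≃ (R ⊗[k] Ω[k⁄ℤ]) × Ω[R⁄k]`. Both factors are free (`Ω[k⁄ℤ]` is a vector space), hence
so is `Ω[R⁄ℤ]`, and exterior powers of free modules are free.
-/

open TensorProduct

namespace KaehlerDifferential

variable (A B C : Type*) [CommRing A] [CommRing B] [CommRing C] [Algebra A B] [Algebra A C]
  [Algebra B C] [IsScalarTower A B C] [Algebra.FormallySmooth B C]

theorem mapBaseChange_injective_of_formallySmooth :
    Function.Injective (mapBaseChange A B C) := by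
  rw [injective_iff_map_eq_zero]
  intro x hx
  obtain ⟨y, rfl⟩ := (Algebra.H1Cotangent.exact_δ_mapBaseChange A B C x).mp hx
  rw [Subsingleton.elim y 0, map_zero]

theorem exists_linearEquiv_prod_of_formallySmooth :
    Nonempty (Ω[C⁄A] ≃ₗ[C] (C ⊗[B] Ω[B⁄A]) × Ω[C⁄B]) := by
  obtain ⟨s, hs⟩ := Module.projective_lifting_property (map A B C C) LinearMap.id
    (map_surjective A B C)
  exact ⟨((exact_mapBaseChange_map A B C).splitSurjectiveEquiv
    (mapBaseChange_injective_of_formallySmooth A B C) ⟨s, hs⟩).1⟩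

theorem free_of_formallySmooth [Module.Free B Ω[B⁄A]] [Module.Free C Ω[C⁄B]] :
    Module.Free C Ω[C⁄A] :=
  let ⟨e⟩ := exists_linearEquiv_prod_of_formallySmooth A B C
  Module.Free.of_equiv e.symm

end KaehlerDifferential

/-- Claim in Step 1 of Proposition 4.2: if `R` is a formally smooth algebra over a field `k`
with `Ω¹_{R/k}` free, then every exterior power `⋀ⁱ_R Ω¹_{R/ℤ}` is a free `R`-module;
in particular `Ω¹_{R/ℤ}` itself is free. -/
theorem exteriorPower_kaehlerDifferential_int_free
    (k R : Type u) [Field k] [CommRing R] [Algebra k R]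
    [Algebra.FormallySmooth k R]
    (hfree : Module.Free R (KaehlerDifferential k R)) :
    (∀ i : ℕ, Module.Free R (⋀[R]^i (KaehlerDifferential ℤ R))) ∧
      Module.Free R (KaehlerDifferential ℤ R) := by
  have : Module.Free R Ω[R⁄ℤ] := KaehlerDifferential.free_of_formallySmooth ℤ k R
  exact ⟨fun i => inferInstance, this⟩
end

section
/- Let k be a field, and let r ≥ 1 and m ≥ 1 be integers. Let f be a nonzero polynomial in k[x₁, …, x_r, t]. Then there exists a nonzero polynomial h ∈ k[x₁, …, x_r] such that for every field extension F of k and every point g = (g₁, …, g_r) ∈ F^r with h(g) ≠ 0, there exists s₀ ≥ 1 such that for all integers s ≥ s₀, the polynomial obtained from f by the substitution xᵢ ↦ xᵢ + gᵢ · t^{s(m+1)} (and t ↦ t), regarded as a polynomial in the single variable t with coefficients in F[x₁, …, x_r], has leading coefficient a unit of F[x₁, …, x_r] (i.e., a nonzero constant); in other words, after the substitution the polynomial is monic in t up to a unit, so t is integral over F[x₁, …, x_r] modulo it. -/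
universe u

/-!
Write `f = ∑ cₙ tⁿ` and let `N = s(m+1) > deg_t f`. After `xᵢ ↦ xᵢ + gᵢ tᴺ` the term `cₙ tⁿ`
has `t`-degree at most `N · totalDegree cₙ + n`, and its coefficient there is the top homogeneous
component of `cₙ` evaluated at `g`. As `n < N`, these exponents are ordered like the pairs
`(totalDegree cₙ, n)` lexicographically, so the lexicographically largest pair alone gives the
leading coefficient, and `h` is the top homogeneous component of the corresponding `cₙ`.
-/

open Polynomial Finset

theorem Polynomial.coeff_prod_of_natDegree_le_sum {ι R : Type*} [CommSemiring R] (s : Finset ι)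
    (q : ι → R[X]) (b : ι → ℕ) (h : ∀ i ∈ s, (q i).natDegree ≤ b i) :
    (∏ i ∈ s, q i).coeff (∑ i ∈ s, b i) = ∏ i ∈ s, (q i).coeff (b i) := by
  induction s using Finset.cons_induction with
  | empty => simp
  | cons a s ha ih =>
    have hs : ∀ i ∈ s, (q i).natDegree ≤ b i := fun i hi => h i (mem_cons_of_mem hi)
    rw [prod_cons, sum_cons, prod_cons, coeff_mul_add_eq_of_natDegree_le (h a (mem_cons_self a s))
      ((natDegree_prod_le _ _).trans (sum_le_sum hs)), ih hs]

namespace MvPolynomial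

variable {σ R : Type*} [CommSemiring R]

noncomputable def leadingForm (p : MvPolynomial σ R) : MvPolynomial σ R :=
  homogeneousComponent p.totalDegree p

lemma leadingForm_ne_zero {p : MvPolynomial σ R} (hp : p ≠ 0) : p.leadingForm ≠ 0 := by
  obtain ⟨d, hd, hdeg⟩ :=
    exists_mem_eq_sup p.support (support_nonempty.2 hp) fun d => d.degree
  rw [← support_nonempty, leadingForm, support_homogeneousComponent]
  exact ⟨d, mem_filter.2 ⟨hd, hdeg.symm⟩⟩

end MvPolynomial

lemma Nat.mul_add_lt_mul_add_of_toLex_lt {N a b a' b' : ℕ} (hb : b < N)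
    (h : toLex (a, b) < toLex (a', b')) : N * a + b < N * a' + b' := by
  obtain h | ⟨rfl, h⟩ : a < a' ∨ a = a' ∧ b < b' := Prod.Lex.toLex_lt_toLex.1 h
  · nlinarith
  · omega

section Translate

variable {σ k F : Type*} [CommSemiring k] [CommSemiring F] [Algebra k F]

/-- The paper's `φ*_{g,s}` is `translateByPow g (s * (m + 1))`. -/
noncomputable def translateByPow (g : σ → F) (N : ℕ) :
    MvPolynomial σ k →ₐ[k] (MvPolynomial σ F)[X] :=
  MvPolynomial.aeval fun i => C (MvPolynomial.X i) + C (MvPolynomial.C (g i)) * X ^ N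

variable (g : σ → F) {N : ℕ}

lemma translateByPow_X (i : σ) :
    translateByPow (k := k) g N (MvPolynomial.X i) =
      C (MvPolynomial.X i) + C (MvPolynomial.C (g i)) * X ^ N :=
  MvPolynomial.aeval_X _ _

lemma natDegree_translateByPow_X_le (i : σ) :
    (translateByPow (k := k) g N (MvPolynomial.X i)).natDegree ≤ N := by
  rw [translateByPow_X]
  compute_degree

lemma coeff_translateByPow_X (hN : 0 < N) (i : σ) :
    (translateByPow (k := k) g N (MvPolynomial.X i)).coeff N = MvPolynomial.C (g i) := by
  rw [translateByPow_X, coeff_add, coeff_C, if_neg hN.ne', coeff_C_mul_X_pow, if_pos rfl,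
    zero_add]

lemma translateByPow_monomial (d : σ →₀ ℕ) (c : k) :
    translateByPow g N (MvPolynomial.monomial d c) =
      C (MvPolynomial.C (algebraMap k F c)) *
        ∏ i ∈ d.support, translateByPow (k := k) g N (MvPolynomial.X i) ^ d i := by
  rw [translateByPow, MvPolynomial.aeval_monomial, Polynomial.algebraMap_apply,
    MvPolynomial.algebraMap_apply, Finsupp.prod]
  simp only [MvPolynomial.aeval_X]

lemma natDegree_translateByPow_monomial_le (d : σ →₀ ℕ) (c : k) :
    (translateByPow g N (MvPolynomial.monomial d c)).natDegree ≤ N * d.degree := by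
  rw [translateByPow_monomial, Finsupp.degree_apply, mul_sum]
  refine natDegree_C_mul_le _ _ |>.trans <| (natDegree_prod_le _ _).trans <|
    sum_le_sum fun i _ => ?_
  rw [mul_comm]
  exact natDegree_pow_le_of_le _ (natDegree_translateByPow_X_le g i)

lemma coeff_translateByPow_monomial (hN : 0 < N) (d : σ →₀ ℕ) (c : k) :
    (translateByPow g N (MvPolynomial.monomial d c)).coeff (N * d.degree) =
      MvPolynomial.C (MvPolynomial.aeval g (MvPolynomial.monomial d c)) := by
  have hpow : ∀ i ∈ d.support,
      (translateByPow (k := k) g N (MvPolynomial.X i) ^ d i).coeff (d i * N) =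
        MvPolynomial.C (g i ^ d i) := fun i _ => by
    rw [coeff_pow_of_natDegree_le (natDegree_translateByPow_X_le g i),
      coeff_translateByPow_X g hN, map_pow]
  rw [translateByPow_monomial, coeff_C_mul, Finsupp.degree_apply, mul_sum]
  simp_rw [mul_comm N]
  rw [coeff_prod_of_natDegree_le_sum _ _ _
      fun i _ => natDegree_pow_le_of_le _ (natDegree_translateByPow_X_le g i),
    prod_congr rfl hpow, ← map_prod, ← map_mul, MvPolynomial.aeval_monomial, Finsupp.prod]

lemma natDegree_translateByPow_le (p : MvPolynomial σ k) :
    (translateByPow g N p).natDegree ≤ N * p.totalDegree := by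
  conv_lhs => rw [p.as_sum, map_sum]
  exact natDegree_sum_le_of_forall_le _ _ fun d hd =>
    (natDegree_translateByPow_monomial_le g d _).trans
      (Nat.mul_le_mul_left N (MvPolynomial.le_totalDegree hd))

lemma coeff_translateByPow_of_totalDegree_le (hN : 0 < N) {p : MvPolynomial σ k} {e : ℕ}
    (he : p.totalDegree ≤ e) :
    (translateByPow g N p).coeff (N * e) =
      MvPolynomial.C (MvPolynomial.aeval g (MvPolynomial.homogeneousComponent e p)) := by
  conv_lhs => rw [p.as_sum, map_sum]
  rw [MvPolynomial.homogeneousComponent_apply, map_sum, map_sum, finsetSum_coeff, sum_filter]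
  refine sum_congr rfl fun d hd => ?_
  split_ifs with hde
  · rw [← hde, coeff_translateByPow_monomial g hN]
  · have hlt : d.degree < e := (MvPolynomial.le_totalDegree hd |>.trans he).lt_of_ne hde
    exact coeff_eq_zero_of_natDegree_lt <|
      (natDegree_translateByPow_monomial_le g d _).trans_lt (Nat.mul_lt_mul_of_pos_left hlt hN)

lemma natDegree_translateByPow_mul_X_pow_le (p : MvPolynomial σ k) (n : ℕ) :
    (translateByPow g N p * X ^ n).natDegree ≤ N * p.totalDegree + n :=
  natDegree_mul_le.trans (add_le_add (natDegree_translateByPow_le g p) (natDegree_X_pow_le n))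

theorem leadingCoeff_eval₂_translateByPow (f : (MvPolynomial σ k)[X]) (hN : f.natDegree < N)
    {n : ℕ} (hmax : ∀ n' ∈ f.support,
      toLex ((f.coeff n').totalDegree, n') ≤ toLex ((f.coeff n).totalDegree, n))
    (hg : MvPolynomial.aeval g (f.coeff n).leadingForm ≠ 0) :
    (f.eval₂ (translateByPow (k := k) g N : MvPolynomial σ k →+* (MvPolynomial σ F)[X])
      X).leadingCoeff = MvPolynomial.C (MvPolynomial.aeval g (f.coeff n).leadingForm) := by
  have hn : n ∈ f.support := by
    contrapose! hg
    rw [notMem_support_iff.1 hg, MvPolynomial.leadingForm, map_zero, map_zero]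
  set K := N * (f.coeff n).totalDegree + n
  have hcoeff : (translateByPow g N (f.coeff n) * X ^ n).coeff K =
      MvPolynomial.C (MvPolynomial.aeval g (f.coeff n).leadingForm) := by
    rw [coeff_mul_X_pow, coeff_translateByPow_of_totalDegree_le g (by omega) le_rfl]
    rfl
  have hdeg : (translateByPow g N (f.coeff n) * X ^ n).degree = (K : WithBot ℕ) :=
    degree_eq_of_le_of_coeff_ne_zero
      (degree_le_of_natDegree_le (natDegree_translateByPow_mul_X_pow_le g _ n))
      (hcoeff ▸ (map_ne_zero_iff _ (MvPolynomial.C_injective σ F)).2 hg)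
  have hrest : (∑ n' ∈ f.support.erase n, translateByPow g N (f.coeff n') * X ^ n').degree <
      (translateByPow g N (f.coeff n) * X ^ n).degree := by
    rw [hdeg]
    refine (degree_sum_le _ _).trans_lt <|
      (Finset.sup_lt_iff (WithBot.bot_lt_coe _)).2 fun n' hn' => ?_
    obtain ⟨hne, hn'⟩ := mem_erase.1 hn'
    exact degree_le_natDegree.trans_lt <| WithBot.coe_lt_coe.2 <|
      (natDegree_translateByPow_mul_X_pow_le g _ n').trans_lt <|
      Nat.mul_add_lt_mul_add_of_toLex_lt ((le_natDegree_of_mem_supp n' hn').trans_lt hN) <|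
      (hmax n' hn').lt_of_ne fun h => hne (congrArg Prod.snd (toLex.injective h))
  rw [eval₂_eq_sum, Polynomial.sum_def, ← add_sum_erase _ _ hn]
  simp only [RingHom.coe_coe]
  rw [leadingCoeff_add_of_degree_lt' hrest, leadingCoeff, natDegree_eq_of_degree_eq_some hdeg,
    hcoeff]

end Translate

theorem exists_generic_translate_monic_in_t_general
    (k : Type u) [Field k] (r m : ℕ)
    (f : Polynomial (MvPolynomial (Fin r) k)) (hf : f ≠ 0) :
    ∃ h : MvPolynomial (Fin r) k, h ≠ 0 ∧
      ∀ (F : Type u) [Field F] [Algebra k F] (g : Fin r → F),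
        MvPolynomial.aeval g h ≠ 0 →
        ∃ s₀ : ℕ, 1 ≤ s₀ ∧ ∀ s : ℕ, s₀ ≤ s →
          IsUnit (Polynomial.leadingCoeff
            (Polynomial.eval₂
              ((MvPolynomial.aeval fun i => Polynomial.C (MvPolynomial.X i) +
                  Polynomial.C (MvPolynomial.C (g i)) * Polynomial.X ^ (s * (m + 1)) :
                MvPolynomial (Fin r) k →ₐ[k] Polynomial (MvPolynomial (Fin r) F)) :
                  MvPolynomial (Fin r) k →+* Polynomial (MvPolynomial (Fin r) F))
              Polynomial.X f)) := by
  obtain ⟨n, hn, hmax⟩ := f.support.exists_max_image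
    (fun n => toLex ((f.coeff n).totalDegree, n)) (nonempty_support_iff.2 hf)
  refine ⟨_, MvPolynomial.leadingForm_ne_zero (mem_support_iff.1 hn),
    fun F _ _ g hg => ⟨f.natDegree + 1, le_add_self, fun s hs => ?_⟩⟩
  have hN : f.natDegree < s * (m + 1) := by nlinarith
  rw [← translateByPow, leadingCoeff_eval₂_translateByPow g f hN hmax hg]
  exact (isUnit_iff_ne_zero.2 hg).map _

/-- Lemma 6.2 (lem:monic): for a nonzero `f ∈ k[x₁,…,x_r,t]` there is a nonempty open set
of parameters `g` such that for all sufficiently large `s`, the substitution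
`xᵢ ↦ xᵢ + gᵢ t^{s(m+1)}` makes `f` monic in `t` up to a unit. -/
theorem exists_generic_translate_monic_in_t
    (k : Type u) [Field k] (r m : ℕ) (hr : 1 ≤ r) (hm : 1 ≤ m)
    (f : Polynomial (MvPolynomial (Fin r) k)) (hf : f ≠ 0) :
    ∃ h : MvPolynomial (Fin r) k, h ≠ 0 ∧
      ∀ (F : Type u) [Field F] [Algebra k F] (g : Fin r → F),
        MvPolynomial.aeval g h ≠ 0 →
        ∃ s₀ : ℕ, 1 ≤ s₀ ∧ ∀ s : ℕ, s₀ ≤ s →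
          IsUnit (Polynomial.leadingCoeff
            (Polynomial.eval₂
              ((MvPolynomial.aeval fun i => Polynomial.C (MvPolynomial.X i) +
                  Polynomial.C (MvPolynomial.C (g i)) * Polynomial.X ^ (s * (m + 1)) :
                MvPolynomial (Fin r) k →ₐ[k] Polynomial (MvPolynomial (Fin r) F)) :
                  MvPolynomial (Fin r) k →+* Polynomial (MvPolynomial (Fin r) F))
              Polynomial.X f)) :=
  exists_generic_translate_monic_in_t_general k r m f hf
end
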